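/- arXiv:2409.17511 — 4 statements merged into one kernel-verified Lean document; each statement's English description precedes it below -/
import Mathlib

section
/- If the graph G_t is δ-trivial (i.e., |x_i(t) - x_j(t)| ≤ δ for all i, j ∈ [n]), then G_{t+1} is also δ-trivial, for every δ > 0. -/
open Finset
open scoped Classical

/-- The threshold graph `G_t`: social neighbors whose garbage differs by at most `ε`. -/
def Gt {n : ℕ} (G : SimpleGraph (Fin n)) (x : ℕ → Fin n → ℝ) (ε : ℝ) (t : ℕ) :
    SimpleGraph (Fin n) where
  Adj i j := G.Adj i j ∧ |x t i - x t j| ≤ ε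
  symm := by
    constructor
    intro i j h
    exact ⟨h.1.symm, by rw [abs_sub_comm]; exact h.2⟩
  loopless := by
    constructor
    intro i h
    exact G.irrefl h.1

/-- `|E_t|`: the number of edges of `G_t`. -/
noncomputable def Ecard {n : ℕ} (G : SimpleGraph (Fin n)) (x : ℕ → Fin n → ℝ) (ε : ℝ)
    (t : ℕ) : ℕ :=
  (Gt G x ε t).edgeSet.ncard

/-- `N_i(t)`: the neighbors of `i` in `G_t`, as a finset. -/
noncomputable def Nb {n : ℕ} (G : SimpleGraph (Fin n)) (x : ℕ → Fin n → ℝ) (ε : ℝ)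
    (t : ℕ) (i : Fin n) : Finset (Fin n) :=
  Finset.univ.filter fun j => (Gt G x ε t).Adj i j

/-- The update rule of the garbage disposal game. -/
def Update {n : ℕ} (G : SimpleGraph (Fin n)) (x : ℕ → Fin n → ℝ) (ε : ℝ) : Prop :=
  ∀ t i,
    x (t + 1) i =
      (if (Gt G x ε t).edgeSet.Nonempty then (1 : ℝ) else 0) / (Ecard G x ε t : ℝ) *
          ∑ j ∈ Nb G x ε t i, x t j +
        (1 - ((Nb G x ε t i).card : ℝ) / (Ecard G x ε t : ℝ) *
            (if (Gt G x ε t).edgeSet.Nonempty then (1 : ℝ) else 0)) * x t i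

/-- The Lyapunov functional `Z_t`. -/
noncomputable def Z {n : ℕ} (G : SimpleGraph (Fin n)) (x : ℕ → Fin n → ℝ) (ε : ℝ)
    (t : ℕ) : ℝ :=
  ∑ i, ∑ j,
    max (min (ε ^ 2) ((x t i - x t j) ^ 2)) (ε ^ 2 * if ¬ G.Adj i j then 1 else 0)

/-!
Each new value `x_i(t+1)` is a convex combination of old values: it gives weight `1/|E_t|` to
each of the `|N_i(t)| ≤ |E_t|` neighbours and the remaining weight to `x_i(t)`. Hence every new
value lies in the interval `[min_k x_k(t), max_k x_k(t)]`, whose length is at most `δ`.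
-/

theorem SimpleGraph.degree_le_ncard_edgeSet {V : Type*} [Fintype V] (H : SimpleGraph V)
    [DecidableRel H.Adj] (v : V) : H.degree v ≤ H.edgeSet.ncard := by
  rw [← coe_edgeFinset, Set.ncard_coe_finset]
  exact H.degree_le_card_edgeFinset v

theorem mul_sum_add_one_sub_card_mul_mem_Icc {R ι : Type*} [CommRing R] [PartialOrder R]
    [IsOrderedRing R] {s : Finset ι} {f : ι → R} {w a m M : R} (hw : 0 ≤ w)
    (hsw : #s * w ≤ 1) (hf : ∀ j ∈ s, f j ∈ Set.Icc m M) (ha : a ∈ Set.Icc m M) :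
    w * ∑ j ∈ s, f j + (1 - #s * w) * a ∈ Set.Icc m M := by
  constructor
  · calc m = w * (#s * m) + (1 - #s * w) * m := by ring
      _ ≤ w * ∑ j ∈ s, f j + (1 - #s * w) * a := by
        gcongr
        · simpa using s.card_nsmul_le_sum f m fun j hj ↦ (hf j hj).1
        · exact ha.1
  · calc w * ∑ j ∈ s, f j + (1 - #s * w) * a ≤ w * (#s * M) + (1 - #s * w) * M := by
          gcongr
          · simpa using s.sum_le_card_nsmul f M fun j hj ↦ (hf j hj).2
          · exact ha.2
      _ = M := by ring

theorem card_Nb_le_Ecard {n : ℕ} (G : SimpleGraph (Fin n)) (x : ℕ → Fin n → ℝ) (ε : ℝ)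
    (t : ℕ) (i : Fin n) : #(Nb G x ε t i) ≤ Ecard G x ε t := by
  rw [Nb, ← SimpleGraph.neighborFinset_eq_filter]
  exact (Gt G x ε t).degree_le_ncard_edgeSet i

theorem update_mem_Icc {n : ℕ} {G : SimpleGraph (Fin n)} {x : ℕ → Fin n → ℝ} {ε : ℝ}
    (hupd : Update G x ε) {t : ℕ} {m M : ℝ} (hx : ∀ j, x t j ∈ Set.Icc m M) (i : Fin n) :
    x (t + 1) i ∈ Set.Icc m M := by
  set w : ℝ := (if (Gt G x ε t).edgeSet.Nonempty then 1 else 0) / Ecard G x ε t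
  have hupd_i :
      x (t + 1) i = w * ∑ j ∈ Nb G x ε t i, x t j + (1 - #(Nb G x ε t i) * w) * x t i := by
    rw [hupd t i]; ring
  have hw : 0 ≤ w := by positivity
  have hsw : #(Nb G x ε t i) * w ≤ 1 := by
    rcases (Ecard G x ε t).eq_zero_or_pos with hE | hE
    · simp [w, hE]
    · calc (#(Nb G x ε t i) : ℝ) * w ≤ Ecard G x ε t * (1 / Ecard G x ε t) := by
            gcongr
            · exact_mod_cast card_Nb_le_Ecard G x ε t i
            · exact div_le_div_of_nonneg_right (by split_ifs <;> norm_num) (by positivity)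
        _ = 1 := by field_simp
  rw [hupd_i]
  exact mul_sum_add_one_sub_card_mul_mem_Icc hw hsw (fun j _ ↦ hx j) (hx i)

theorem delta_trivial_preserving_general {n : ℕ} (G : SimpleGraph (Fin n)) (x : ℕ → Fin n → ℝ)
    (ε : ℝ) (hupd : Update G x ε)
    (δ : ℝ) (t : ℕ)
    (htriv : ∀ i j, |x t i - x t j| ≤ δ) :
    ∀ i j, |x (t + 1) i - x (t + 1) j| ≤ δ := by
  intro i j
  have hne : (univ : Finset (Fin n)).Nonempty := univ_nonempty_iff.mpr ⟨i⟩
  obtain ⟨kmin, -, hkmin⟩ := exists_min_image univ (x t) hne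
  obtain ⟨kmax, -, hkmax⟩ := exists_max_image univ (x t) hne
  have hx : ∀ k, x t k ∈ Set.Icc (x t kmin) (x t kmax) :=
    fun k ↦ ⟨hkmin k (mem_univ k), hkmax k (mem_univ k)⟩
  calc |x (t + 1) i - x (t + 1) j|
      = dist (x (t + 1) i) (x (t + 1) j) := (Real.dist_eq _ _).symm
    _ ≤ x t kmax - x t kmin := Real.dist_le_of_mem_Icc (update_mem_Icc hupd hx i)
        (update_mem_Icc hupd hx j)
    _ ≤ δ := (le_abs_self _).trans (htriv kmax kmin)

/-- Lemma 2 (δ-trivial preserving): if `G_t` is δ-trivial then so is `G_{t+1}`. -/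
theorem delta_trivial_preserving {n : ℕ} (G : SimpleGraph (Fin n)) (x : ℕ → Fin n → ℝ)
    (ε : ℝ) (hε : 0 < ε) (hx0 : ∀ i, 0 ≤ x 0 i) (hupd : Update G x ε)
    (δ : ℝ) (hδ : 0 < δ) (t : ℕ)
    (htriv : ∀ i j, |x t i - x t j| ≤ δ) :
    ∀ i j, |x (t + 1) i - x (t + 1) j| ≤ δ :=
  delta_trivial_preserving_general G x ε hupd δ t htriv
end

section
/- Let Z_t = ∑_{i,j ∈ [n]} [ε² ∧ (x_i(t) − x_j(t))²] ∨ (ε²·𝟙{(i,j) ∉ E}). Then Z_t − Z_{t+1} ≥ 4 ∑_{i ∈ [n]} (|E_t| − |N_i(t)|)·(x_i(t) − x_i(t+1))². -/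
open Finset
open scoped Classical

/-!
On an edge of `G_t` the summand of `Z_t` is the squared difference `(x_i - x_j)²` and the
summand of `Z_{t+1}` is at most the new squared difference; on every other pair the summand of
`Z_t` already has the maximal value `ε²`. Hence `Z_t - Z_{t+1}` dominates the drop of the
Dirichlet energy `∑_{i ~ j} (x_i - x_j)²` of `G_t`. The update is the Laplacian step
`|E_t| δ = -L x(t)` with `δ = x(t+1) - x(t)`: summation by parts turns the cross term of the
energy drop into `4 |E_t| ∑ δ_i²`, and the quadratic term is at most `4 ∑ deg_i δ_i²` because
`(δ_i - δ_j)² ≤ 2 δ_i² + 2 δ_j²`.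
-/

namespace SimpleGraph

variable {V R : Type*} [Fintype V] (H : SimpleGraph V) [DecidableRel H.Adj]

def dirichletEnergy [CommRing R] (x : V → R) : R :=
  ∑ i, ∑ j ∈ H.neighborFinset i, (x i - x j) ^ 2

theorem sum_sum_neighborFinset_comm {M : Type*} [AddCommMonoid M] (f : V → V → M) :
    ∑ i, ∑ j ∈ H.neighborFinset i, f i j = ∑ i, ∑ j ∈ H.neighborFinset i, f j i := by
  simp_rw [neighborFinset_eq_filter, sum_filter]
  rw [sum_comm]
  simp_rw [H.adj_comm]

theorem sum_sum_neighborFinset_sub_mul_sub [CommRing R] (x y : V → R) :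
    ∑ i, ∑ j ∈ H.neighborFinset i, (x i - x j) * (y i - y j) =
      2 * ∑ i, y i * ∑ j ∈ H.neighborFinset i, (x i - x j) := by
  have hswap := H.sum_sum_neighborFinset_comm fun i j => (x i - x j) * y j
  have hneg : ∀ i j, (x j - x i) * y i = -((x i - x j) * y i) := fun i j => by ring
  calc ∑ i, ∑ j ∈ H.neighborFinset i, (x i - x j) * (y i - y j)
      = ∑ i, ∑ j ∈ H.neighborFinset i, (x i - x j) * y i -
          ∑ i, ∑ j ∈ H.neighborFinset i, (x i - x j) * y j := by
        simp only [mul_sub, sum_sub_distrib]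
    _ = 2 * ∑ i, ∑ j ∈ H.neighborFinset i, (x i - x j) * y i := by
        rw [hswap]
        simp only [hneg, sum_neg_distrib]
        ring
    _ = 2 * ∑ i, y i * ∑ j ∈ H.neighborFinset i, (x i - x j) := by
        simp only [mul_sum, mul_comm]

theorem dirichletEnergy_le [CommRing R] [LinearOrder R] [IsStrictOrderedRing R] (y : V → R) :
    H.dirichletEnergy y ≤ 4 * ∑ i, (H.degree i : R) * y i ^ 2 := by
  have hswap := H.sum_sum_neighborFinset_comm fun i j => 2 * y j ^ 2
  calc H.dirichletEnergy y
      ≤ ∑ i, ∑ j ∈ H.neighborFinset i, (2 * y i ^ 2 + 2 * y j ^ 2) := by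
        unfold dirichletEnergy
        gcongr with i _ j _
        nlinarith [sq_nonneg (y i + y j)]
    _ = 4 * ∑ i, (H.degree i : R) * y i ^ 2 := by
        simp only [sum_add_distrib, hswap, sum_const, card_neighborFinset_eq_degree,
          nsmul_eq_mul, mul_sum]
        rw [← sum_add_distrib]
        exact sum_congr rfl fun i _ => by ring

/-- `y = x - L x / m` for the Laplacian `L` of `H`, multiplied out so that it also makes sense
for `m = 0`. -/
def IsLaplacianStep [CommRing R] (m : R) (x y : V → R) : Prop :=
  ∀ i, m * (y i - x i) = ∑ j ∈ H.neighborFinset i, (x j - x i)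

variable {H}

theorem IsLaplacianStep.le_dirichletEnergy_sub [CommRing R] [LinearOrder R]
    [IsStrictOrderedRing R] {m : R} {x y : V → R}
    (h : H.IsLaplacianStep m x y) :
    4 * ∑ i, (m - H.degree i) * (x i - y i) ^ 2 ≤ H.dirichletEnergy x - H.dirichletEnergy y := by
  set δ : V → R := fun i => y i - x i
  have hexpand : H.dirichletEnergy x - H.dirichletEnergy y =
      -2 * ∑ i, ∑ j ∈ H.neighborFinset i, (x i - x j) * (δ i - δ j) - H.dirichletEnergy δ := by
    simp only [dirichletEnergy, mul_sum, ← sum_sub_distrib]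
    exact sum_congr rfl fun i _ => sum_congr rfl fun j _ => by ring
  have hcross : ∑ i, ∑ j ∈ H.neighborFinset i, (x i - x j) * (δ i - δ j) =
      -2 * ∑ i, m * δ i ^ 2 := by
    rw [sum_sum_neighborFinset_sub_mul_sub, mul_sum, mul_sum]
    refine sum_congr rfl fun i _ => ?_
    have hi : ∑ j ∈ H.neighborFinset i, (x i - x j) = -(m * δ i) := by
      rw [h i, ← sum_neg_distrib]
      exact sum_congr rfl fun j _ => by ring
    rw [hi]
    ring
  have hrhs : ∑ i, (m - H.degree i) * (x i - y i) ^ 2 =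
      ∑ i, m * δ i ^ 2 - ∑ i, (H.degree i : R) * δ i ^ 2 := by
    rw [← sum_sub_distrib]
    exact sum_congr rfl fun i _ => by ring
  linarith [H.dirichletEnergy_le δ]

end SimpleGraph

theorem sq_sub_sq_le_max_min_sub_max_min {ε a b : ℝ} (hε : 0 ≤ ε) (p : Prop) [Decidable p] :
    (if p ∧ |a| ≤ ε then a ^ 2 - b ^ 2 else 0) ≤
      max (min (ε ^ 2) (a ^ 2)) (ε ^ 2 * if ¬p then 1 else 0) -
        max (min (ε ^ 2) (b ^ 2)) (ε ^ 2 * if ¬p then 1 else 0) := by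
  by_cases hp : p
  · have hb : max (min (ε ^ 2) (b ^ 2)) 0 ≤ min (ε ^ 2) (b ^ 2) :=
      max_le le_rfl (le_min (sq_nonneg ε) (sq_nonneg b))
    by_cases ha : |a| ≤ ε
    · have ha2 : a ^ 2 ≤ ε ^ 2 := sq_le_sq.mpr (by rwa [abs_of_nonneg hε])
      simp only [hp, ha, and_self, if_true, not_true_eq_false, if_false, mul_zero,
        min_eq_right ha2, max_eq_left (sq_nonneg a)]
      linarith [min_le_right (ε ^ 2) (b ^ 2)]
    · have ha2 : ε ^ 2 ≤ a ^ 2 := sq_le_sq.mpr (by rw [abs_of_nonneg hε]; exact (not_le.mp ha).le)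
      simp only [hp, ha, and_false, if_false, not_true_eq_false, mul_zero,
        min_eq_left ha2, max_eq_left (sq_nonneg ε)]
      linarith [min_le_left (ε ^ 2) (b ^ 2)]
  · simp [hp]

theorem Nb_eq_neighborFinset {n : ℕ} (G : SimpleGraph (Fin n)) (x : ℕ → Fin n → ℝ) (ε : ℝ)
    (t : ℕ) (i : Fin n) : Nb G x ε t i = (Gt G x ε t).neighborFinset i := by
  rw [Nb, SimpleGraph.neighborFinset_eq_filter]

theorem dirichletEnergy_sub_le_Z_sub {n : ℕ} (G : SimpleGraph (Fin n)) (x : ℕ → Fin n → ℝ)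
    {ε : ℝ} (hε : 0 ≤ ε) (t s : ℕ) :
    (Gt G x ε t).dirichletEnergy (x t) - (Gt G x ε t).dirichletEnergy (x s) ≤
      Z G x ε t - Z G x ε s := by
  simp only [SimpleGraph.dirichletEnergy, Z, SimpleGraph.neighborFinset_eq_filter, sum_filter,
    ← sum_sub_distrib]
  refine sum_le_sum fun i _ => sum_le_sum fun j _ => ?_
  rw [ite_sub_ite, sub_self]
  -- the two sides decide adjacency in `Gt` through different `Decidable` instances
  exact (ite_cond_congr (c := G.Adj i j ∧ |x t i - x t j| ≤ ε) rfl).trans_le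
    (sq_sub_sq_le_max_min_sub_max_min hε (G.Adj i j))

theorem Update.isLaplacianStep {n : ℕ} {G : SimpleGraph (Fin n)} {x : ℕ → Fin n → ℝ} {ε : ℝ}
    (hupd : Update G x ε) (t : ℕ) :
    (Gt G x ε t).IsLaplacianStep (Ecard G x ε t : ℝ) (x t) (x (t + 1)) := by
  intro i
  rw [hupd t i, ← Nb_eq_neighborFinset]
  by_cases hne : (Gt G x ε t).edgeSet.Nonempty
  · have hm : (Ecard G x ε t : ℝ) ≠ 0 := by
      have : 0 < Ecard G x ε t := (Set.ncard_pos (Set.toFinite _)).mpr hne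
      positivity
    rw [if_pos hne, sum_sub_distrib, sum_const, nsmul_eq_mul]
    field_simp
    ring
  · have hNb : Nb G x ε t i = ∅ :=
      filter_eq_empty_iff.mpr fun j _ hij => hne ⟨s(i, j), hij⟩
    simp [hNb]

theorem Z_decrement_general {n : ℕ} (G : SimpleGraph (Fin n)) (x : ℕ → Fin n → ℝ)
    (ε : ℝ) (hε : 0 < ε) (hupd : Update G x ε) (t : ℕ) :
    Z G x ε t - Z G x ε (t + 1) ≥
      4 * ∑ i, ((Ecard G x ε t : ℝ) - ((Nb G x ε t i).card : ℝ)) *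
        (x t i - x (t + 1) i) ^ 2 := by
  simp only [Nb_eq_neighborFinset, SimpleGraph.card_neighborFinset_eq_degree]
  exact (hupd.isLaplacianStep t).le_dirichletEnergy_sub.trans
    (dirichletEnergy_sub_le_Z_sub G x hε.le t (t + 1))

/-- Lemma 3: `Z_t − Z_{t+1} ≥ 4 ∑_i (|E_t| − |N_i(t)|) (x_i(t) − x_i(t+1))²`. -/
theorem Z_decrement {n : ℕ} (G : SimpleGraph (Fin n)) (x : ℕ → Fin n → ℝ)
    (ε : ℝ) (hε : 0 < ε) (hx0 : ∀ i, 0 ≤ x 0 i) (hupd : Update G x ε) (t : ℕ) :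
    Z G x ε t - Z G x ε (t + 1) ≥
      4 * ∑ i, ((Ecard G x ε t : ℝ) - ((Nb G x ε t i).card : ℝ)) *
        (x t i - x (t + 1) i) ^ 2 :=
  Z_decrement_general G x ε hε hupd t
end

section
/- If the graph G_t is δ-nontrivial (i.e., there exist i, j ∈ [n] with |x_i(t) − x_j(t)| > δ) and G_t has a δ-nontrivial connected component, then ∑_{i ∈ [n]} (x_i(t) − x_i(t+1))² > 2δ² / (n⁶·|E|²). -/
open Finset
open scoped Classical

/-! Take `i, j` in one component of `G_t` with `x_i(t) + δ < x_j(t)`. Of the `n` intervals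
`(x_i + kδ/n, x_i + (k+1)δ/n]`, `k < n`, one contains no value of `x(t)`. The vertices of the
component lying below that gap form a set `A` containing `i` but not `j`, and every `G_t`-edge
leaving `A` climbs by more than `δ/n`. Edges inside `A` cancel in the total displacement of `A`,
which is therefore more than `δ / (n |E_t|) ≥ δ / (n |E|)`; Cauchy–Schwarz turns this into
`∑ (x_v(t) - x_v(t+1))² > δ² / (n³ |E|²)`, which beats the claimed bound since `n ≥ 2`. -/

theorem exists_gap_Ioc {α : Type*} [Fintype α] (y : α → ℝ) {c η : ℝ} (hη : 0 < η) {i₀ : α}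
    (hi₀ : y i₀ ≤ c) :
    ∃ k < Fintype.card α, ∀ v, y v ∉ Set.Ioc (c + k * η) (c + (k + 1) * η) := by
  -- `bucket v = k` exactly when `y v ∈ Ioc (c + k * η) (c + (k + 1) * η)`
  set bucket : α → ℕ := fun v => ⌈(y v - c) / η⌉₊ - 1
  have hcard : #((univ.erase i₀).image bucket) < #(range (Fintype.card α)) := by
    calc #((univ.erase i₀).image bucket) ≤ #(univ.erase i₀) := card_image_le
      _ < #(range (Fintype.card α)) := by
        rw [card_erase_of_mem (mem_univ _), card_range, card_univ]
        exact Nat.sub_lt (Fintype.card_pos_iff.mpr ⟨i₀⟩) one_pos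
  obtain ⟨k, hk, hk_free⟩ := exists_mem_notMem_of_card_lt_card hcard
  refine ⟨k, mem_range.mp hk, fun v ⟨hlo, hhi⟩ => hk_free (mem_image.mpr ⟨v, ?_, ?_⟩)⟩
  · refine mem_erase.mpr ⟨fun hv => ?_, mem_univ _⟩
    subst hv
    nlinarith [(Nat.cast_nonneg k : (0 : ℝ) ≤ k)]
  · have : ⌈(y v - c) / η⌉₊ = k + 1 := by
      rw [Nat.ceil_eq_iff (Nat.succ_ne_zero k), lt_div_iff₀ hη, div_le_iff₀ hη]
      push_cast
      constructor <;> linarith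
    simp [bucket, this]

theorem SimpleGraph.sum_sum_adj_sub_eq_boundary {V : Type*} [Fintype V] (G : SimpleGraph V)
    (y : V → ℝ) (A : Finset V) :
    ∑ v ∈ A, ∑ w ∈ univ.filter (G.Adj v), (y w - y v) =
      ∑ v ∈ A, ∑ w ∈ univ.filter (fun w => G.Adj v w ∧ w ∉ A), (y w - y v) := by
  have hinner : ∑ v ∈ A, ∑ w ∈ A.filter (G.Adj v), (y w - y v) = 0 := by
    have hswap : ∑ v ∈ A, ∑ w ∈ A.filter (G.Adj v), y w =
        ∑ v ∈ A, ∑ w ∈ A.filter (G.Adj v), y v := by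
      simp only [sum_filter]
      rw [sum_comm]
      simp only [G.adj_comm]
    simp only [sum_sub_distrib, hswap, sub_self]
  calc ∑ v ∈ A, ∑ w ∈ univ.filter (G.Adj v), (y w - y v)
      = ∑ v ∈ A, (∑ w ∈ A.filter (G.Adj v), (y w - y v) +
          ∑ w ∈ univ.filter (fun w => G.Adj v w ∧ w ∉ A), (y w - y v)) := by
        refine sum_congr rfl fun v _ => ?_
        rw [← sum_filter_add_sum_filter_not _ (· ∈ A)]
        congr 2 <;> ext w <;> simp [and_comm]
    _ = ∑ v ∈ A, ∑ w ∈ univ.filter (fun w => G.Adj v w ∧ w ∉ A), (y w - y v) := by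
        rw [sum_add_distrib, hinner, zero_add]

theorem SimpleGraph.Reachable.exists_lt_sum_sum_adj_sub {V : Type*} [Fintype V]
    {G : SimpleGraph V} {i j : V} (hij : G.Reachable i j) (y : V → ℝ) {δ : ℝ} (hδ : 0 < δ)
    (hlt : y i + δ < y j) :
    ∃ A : Finset V, δ / Fintype.card V < ∑ v ∈ A, ∑ w ∈ univ.filter (G.Adj v), (y w - y v) := by
  have hcard : (0 : ℝ) < Fintype.card V := by exact_mod_cast Fintype.card_pos_iff.mpr ⟨i⟩
  set η := δ / Fintype.card V
  have hη : 0 < η := div_pos hδ hcard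
  obtain ⟨k, hk, hgap⟩ := exists_gap_Ioc y hη (le_refl (y i))
  set θ := y i + k * η
  set A := univ.filter fun v => G.Reachable i v ∧ y v ≤ θ
  have hθ : θ + η ≤ y i + δ := by
    have : (k + 1 : ℝ) ≤ Fintype.card V := by exact_mod_cast hk
    have : (k + 1) * η ≤ δ := by
      calc (k + 1) * η ≤ Fintype.card V * η := by gcongr
        _ = δ := mul_div_cancel₀ δ hcard.ne'
    linarith
  have hboundary : ∀ v ∈ A, ∀ w, G.Adj v w → w ∉ A → η < y w - y v := by
    intro v hv w hvw hw
    simp only [A, mem_filter, mem_univ, true_and, not_and, not_le] at hv hw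
    have hθw := hw (hv.1.trans hvw.reachable)
    have := hgap w
    simp only [Set.mem_Ioc, not_and, not_le] at this
    linarith [this hθw]
  have hiA : i ∈ A :=
    mem_filter.mpr ⟨mem_univ _, .refl i, le_add_of_nonneg_right (by positivity)⟩
  have hjA : j ∉ A := fun hj => by linarith [(mem_filter.mp hj).2.2]
  obtain ⟨d, -, hdA, hdA'⟩ := hij.some.exists_boundary_dart (A : Set V) hiA hjA
  refine ⟨A, ?_⟩
  rw [G.sum_sum_adj_sub_eq_boundary]
  have hnonneg : ∀ v ∈ A, ∀ w ∈ univ.filter (fun w => G.Adj v w ∧ w ∉ A), 0 ≤ y w - y v :=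
    fun v hv w hw => (hη.trans (hboundary v hv w (mem_filter.mp hw).2.1 (mem_filter.mp hw).2.2)).le
  calc η < y d.snd - y d.fst := hboundary _ hdA _ d.adj hdA'
    _ ≤ ∑ w ∈ univ.filter (fun w => G.Adj d.fst w ∧ w ∉ A), (y w - y d.fst) :=
      single_le_sum (hnonneg _ hdA) (mem_filter.mpr ⟨mem_univ _, d.adj, hdA'⟩)
    _ ≤ _ := single_le_sum (fun v hv => sum_nonneg (hnonneg v hv)) hdA

section GarbageDisposal

variable {n : ℕ} {G : SimpleGraph (Fin n)} {x : ℕ → Fin n → ℝ} {ε : ℝ} {t : ℕ}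

theorem Ecard_le_ncard_edgeSet : Ecard G x ε t ≤ G.edgeSet.ncard :=
  Set.ncard_le_ncard (SimpleGraph.edgeSet_subset_edgeSet.mpr fun _ _ h => h.1) (Set.toFinite _)

theorem Update.sub_eq_sum_div (hupd : Update G x ε) (hE : (Gt G x ε t).edgeSet.Nonempty)
    (i : Fin n) :
    x (t + 1) i - x t i = (∑ j ∈ Nb G x ε t i, (x t j - x t i)) / Ecard G x ε t := by
  have hEcard : (Ecard G x ε t : ℝ) ≠ 0 := by
    exact_mod_cast ((Set.ncard_pos (Set.toFinite _)).mpr hE).ne'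
  rw [hupd t i, if_pos hE, sum_sub_distrib, sum_const, nsmul_eq_mul]
  field_simp
  ring

theorem Update.exists_lt_sum_sub (hupd : Update G x ε) {i j : Fin n}
    (hij : (Gt G x ε t).Reachable i j) {δ : ℝ} (hδ : 0 < δ) (hlt : x t i + δ < x t j) :
    ∃ A : Finset (Fin n), δ / (n * G.edgeSet.ncard) < ∑ v ∈ A, (x (t + 1) v - x t v) := by
  obtain ⟨A, hA⟩ := hij.exists_lt_sum_sum_adj_sub (x t) hδ hlt
  rw [Fintype.card_fin] at hA
  have hji : j ∉ ({i} : Set (Fin n)) := by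
    rintro rfl
    linarith
  obtain ⟨d, -⟩ := hij.some.exists_boundary_dart {i} rfl hji
  have hE : (Gt G x ε t).edgeSet.Nonempty := ⟨d.edge, d.edge_mem⟩
  have hEcard : (0 : ℝ) < Ecard G x ε t := by
    exact_mod_cast (Set.ncard_pos (Set.toFinite _)).mpr hE
  have hEcard_le : (Ecard G x ε t : ℝ) ≤ G.edgeSet.ncard := by
    exact_mod_cast Ecard_le_ncard_edgeSet
  refine ⟨A, ?_⟩
  have hn : (0 : ℝ) < n := by exact_mod_cast Fin.pos i
  calc δ / (n * G.edgeSet.ncard) = δ / n / G.edgeSet.ncard := (div_div _ _ _).symm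
    _ ≤ δ / n / Ecard G x ε t := by gcongr
    _ < (∑ v ∈ A, ∑ w ∈ Nb G x ε t v, (x t w - x t v)) / Ecard G x ε t := by gcongr; exact hA
    _ = ∑ v ∈ A, (x (t + 1) v - x t v) := by
      rw [sum_div]
      exact sum_congr rfl fun v _ => (hupd.sub_eq_sum_div hE v).symm

theorem Update.lt_sum_sq_sub (hupd : Update G x ε) {i j : Fin n}
    (hij : (Gt G x ε t).Reachable i j) {δ : ℝ} (hδ : 0 < δ) (hlt : x t i + δ < x t j) :
    δ ^ 2 / (n ^ 3 * G.edgeSet.ncard ^ 2) < ∑ v, (x t v - x (t + 1) v) ^ 2 := by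
  obtain ⟨A, hA⟩ := hupd.exists_lt_sum_sub hij hδ hlt
  have hn : (0 : ℝ) < n := by exact_mod_cast Fin.pos i
  have hcardA : (#A : ℝ) ≤ n := by exact_mod_cast (card_le_univ A).trans_eq (Fintype.card_fin n)
  calc δ ^ 2 / (n ^ 3 * G.edgeSet.ncard ^ 2) = (δ / (n * G.edgeSet.ncard)) ^ 2 / n := by
        field_simp
    _ < (∑ v ∈ A, (x (t + 1) v - x t v)) ^ 2 / n := by gcongr
    _ ≤ (n * ∑ v, (x t v - x (t + 1) v) ^ 2) / n := by
        gcongr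
        calc (∑ v ∈ A, (x (t + 1) v - x t v)) ^ 2
            ≤ #A * ∑ v ∈ A, (x (t + 1) v - x t v) ^ 2 := sq_sum_le_card_mul_sum_sq
          _ ≤ n * ∑ v, (x t v - x (t + 1) v) ^ 2 := by
            simp only [sub_sq_comm (x (t + 1) _)]
            gcongr
            exact subset_univ A
    _ = ∑ v, (x t v - x (t + 1) v) ^ 2 := mul_div_cancel_left₀ _ hn.ne'

end GarbageDisposal

theorem delta_nontrivial_global_general {n : ℕ} (G : SimpleGraph (Fin n)) (x : ℕ → Fin n → ℝ)
    (ε : ℝ) (hupd : Update G x ε)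
    (δ : ℝ) (hδ : 0 < δ) (t : ℕ)
    (hcomp : ∃ H : (Gt G x ε t).ConnectedComponent,
      ∃ i ∈ H.supp, ∃ j ∈ H.supp, δ < |x t i - x t j|) :
    ∑ i, (x t i - x (t + 1) i) ^ 2 >
      2 * δ ^ 2 / ((n : ℝ) ^ 6 * (G.edgeSet.ncard : ℝ) ^ 2) := by
  obtain ⟨H, i, hi, j, hj, hij⟩ := hcomp
  have hreach : (Gt G x ε t).Reachable i j := H.reachable_of_mem_supp hi hj
  have hbound : δ ^ 2 / (n ^ 3 * G.edgeSet.ncard ^ 2) < ∑ v, (x t v - x (t + 1) v) ^ 2 := by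
    rcases lt_abs.mp hij with h | h
    · exact hupd.lt_sum_sq_sub hreach.symm hδ (by linarith)
    · exact hupd.lt_sum_sq_sub hreach hδ (by linarith)
  have hne : i ≠ j := by
    rintro rfl
    rw [sub_self, abs_zero] at hij
    linarith
  have hn : (2 : ℝ) ≤ n ^ 3 := by
    have := Fintype.one_lt_card_iff.mpr ⟨i, j, hne⟩
    rw [Fintype.card_fin] at this
    calc (2 : ℝ) ≤ n := by exact_mod_cast this
      _ ≤ n ^ 3 := le_self_pow₀ (by exact_mod_cast this.le) (by norm_num)
  calc 2 * δ ^ 2 / ((n : ℝ) ^ 6 * (G.edgeSet.ncard : ℝ) ^ 2)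
      = 2 / n ^ 3 * (δ ^ 2 / (n ^ 3 * G.edgeSet.ncard ^ 2)) := by ring
    _ ≤ δ ^ 2 / (n ^ 3 * G.edgeSet.ncard ^ 2) :=
      mul_le_of_le_one_left (by positivity) (div_le_one_of_le₀ hn (by positivity))
    _ < _ := hbound

/-- Lemma 8 (second part): if `G_t` is δ-nontrivial and has a δ-nontrivial component,
then `∑_i (x_i(t) − x_i(t+1))² > 2δ² / (n⁶ |E|²)`. -/
theorem delta_nontrivial_global {n : ℕ} (G : SimpleGraph (Fin n)) (x : ℕ → Fin n → ℝ)
    (ε : ℝ) (hε : 0 < ε) (hx0 : ∀ i, 0 ≤ x 0 i) (hupd : Update G x ε)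
    (δ : ℝ) (hδ : 0 < δ) (t : ℕ)
    (hnontriv : ∃ i j : Fin n, δ < |x t i - x t j|)
    (hcomp : ∃ H : (Gt G x ε t).ConnectedComponent,
      ∃ i ∈ H.supp, ∃ j ∈ H.supp, δ < |x t i - x t j|) :
    ∑ i, (x t i - x (t + 1) i) ^ 2 >
      2 * δ ^ 2 / ((n : ℝ) ^ 6 * (G.edgeSet.ncard : ℝ) ^ 2) :=
  delta_nontrivial_global_general G x ε hupd δ hδ t hcomp
end

section
/- Let H be a connected undirected simple graph on n ≥ 2 vertices with Laplacian 𝓛, and let λ₂(𝓛) denote the second-smallest eigenvalue of 𝓛. Then λ₂(𝓛) > 2/n³. -/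
open Finset
open scoped Classical

/-- The graph Laplacian: diagonal entries are the degrees, off-diagonal `(i,j)`-entry is
`−1` if `(i,j)` is an edge and `0` otherwise. -/
noncomputable def Lap {n : ℕ} (H : SimpleGraph (Fin n)) : Matrix (Fin n) (Fin n) ℝ :=
  fun i j => if i = j then ((H.neighborSet i).ncard : ℝ)
    else if H.Adj i j then -1 else 0

/-- The second-smallest eigenvalue of the Laplacian, via the Courant–Fischer
characterization: the infimum of the Rayleigh quotient over unit vectors orthogonal
to the all-ones vector (always an eigenvector of the smallest eigenvalue `0`). -/
noncomputable def lambda2 {n : ℕ} (L : Matrix (Fin n) (Fin n) ℝ) : ℝ :=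
  sInf {r : ℝ | ∃ u : Fin n → ℝ, (∑ i, u i ^ 2) = 1 ∧ (∑ i, u i) = 0 ∧
    r = ∑ i, ∑ j, u i * L i j * u j}

lemma Lap_eq {n : ℕ} (H : SimpleGraph (Fin n)) : Lap H = H.lapMatrix ℝ := by
  ext i j
  by_cases h : i = j
  · subst h
    simp [Lap, SimpleGraph.lapMatrix, SimpleGraph.degMatrix, Matrix.sub_apply,
      Matrix.diagonal_apply_eq]
    rw [Set.ncard_eq_toFinset_card']
    simp [SimpleGraph.degree, SimpleGraph.neighborFinset]
  · simp [Lap, SimpleGraph.lapMatrix, SimpleGraph.degMatrix, Matrix.sub_apply,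
      Matrix.diagonal_apply_ne _ h, h]
    split_ifs <;> simp

lemma quad_eq {n : ℕ} (H : SimpleGraph (Fin n)) (u : Fin n → ℝ) :
    (∑ i, ∑ j, u i * Lap H i j * u j) =
      (∑ i, ∑ j, if H.Adj i j then (u i - u j)^2 else 0) / 2 := by
  rw [← SimpleGraph.lapMatrix_toLinearMap₂' ℝ H u, Matrix.toLinearMap₂'_apply, Lap_eq]
  refine Finset.sum_congr rfl fun i _ => Finset.sum_congr rfl fun j _ => ?_
  simp [smul_eq_mul]; ring

lemma walk_bound {n : ℕ} (H : SimpleGraph (Fin n)) (u : Fin n → ℝ) {a b : Fin n}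
    (w : H.Walk a b) :
    (u a - u b)^2 ≤ (w.length : ℝ) *
      (w.darts.map (fun d => (u d.toProd.1 - u d.toProd.2)^2)).sum := by
  induction w with
  | nil => simp
  | @cons a c b h p ih =>
    have hS : 0 ≤ (p.darts.map (fun d => (u d.toProd.1 - u d.toProd.2)^2)).sum := by
      apply List.sum_nonneg
      intro x hx
      simp only [List.mem_map] at hx
      obtain ⟨d, _, rfl⟩ := hx
      positivity
    set S := (p.darts.map (fun d => (u d.toProd.1 - u d.toProd.2)^2)).sum with hSdef
    set L : ℝ := (p.length : ℝ) with hL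
    have hL0 : 0 ≤ L := by positivity
    simp only [SimpleGraph.Walk.length_cons, SimpleGraph.Walk.darts_cons, List.map_cons,
      List.sum_cons, Nat.cast_add, Nat.cast_one]
    set x := u a - u c with hx
    set y := u c - u b with hy
    have hab : u a - u b = x + y := by ring
    rw [hab]
    rcases eq_or_lt_of_le hL0 with h0 | hpos
    · have hy2 : y^2 ≤ 0 := by rw [← h0] at ih; simpa using ih
      have : y = 0 := by nlinarith [sq_nonneg y]
      rw [this]
      nlinarith [sq_nonneg x, hS, h0.symm ▸ hL0]
    · have hLge : (1:ℝ) ≤ L := by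
        have : 1 ≤ p.length := by
          by_contra hc
          push_neg at hc
          interval_cases hl : p.length <;> simp_all
        rw [hL]; exact_mod_cast this
      nlinarith [sq_nonneg (L*x - y), ih, hS, mul_nonneg (sub_nonneg.2 hLge) hS]

lemma darts_sum_le {n : ℕ} (H : SimpleGraph (Fin n)) (u : Fin n → ℝ) {a b : Fin n}
    (w : H.Walk a b) (hw : w.IsPath) :
    (w.darts.map (fun d => (u d.toProd.1 - u d.toProd.2)^2)).sum ≤
      ∑ i, ∑ j, if H.Adj i j then (u i - u j)^2 else 0 := by
  have hnd : w.darts.Nodup := SimpleGraph.Walk.darts_nodup_of_support_nodup hw.support_nodup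
  set l : List (Fin n × Fin n) := w.darts.map (fun d => d.toProd) with hl
  have hlnd : l.Nodup := hnd.map (fun d e hde => SimpleGraph.Dart.ext _ _ hde)
  have h1 : (w.darts.map (fun d => (u d.toProd.1 - u d.toProd.2)^2)).sum
      = (l.map (fun p => (u p.1 - u p.2)^2)).sum := by
    rw [hl, List.map_map]; rfl
  rw [h1, ← List.sum_toFinset _ hlnd]
  have hsub : l.toFinset ⊆ Finset.univ.filter (fun p : Fin n × Fin n => H.Adj p.1 p.2) := by
    intro p hp
    rw [List.mem_toFinset, hl, List.mem_map] at hp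
    obtain ⟨d, hd, rfl⟩ := hp
    simp [d.adj]
  calc ∑ p ∈ l.toFinset, (u p.1 - u p.2)^2
      ≤ ∑ p ∈ Finset.univ.filter (fun p : Fin n × Fin n => H.Adj p.1 p.2), (u p.1 - u p.2)^2 :=
        Finset.sum_le_sum_of_subset_of_nonneg hsub (fun p _ _ => by positivity)
    _ = ∑ i, ∑ j, if H.Adj i j then (u i - u j)^2 else 0 := by
        rw [Finset.sum_filter, Fintype.sum_prod_type]

lemma gap_bound {n : ℕ} (hn : 2 ≤ n) (u : Fin n → ℝ) (h2 : (∑ i, u i ^ 2) = 1)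
    (h0 : (∑ i, u i) = 0) :
    ∃ a b : Fin n, (∀ i, u i ≤ u a) ∧ (∀ i, u b ≤ u i) ∧ 4 / (n:ℝ) ≤ (u a - u b)^2 := by
  have hne : (Finset.univ : Finset (Fin n)).Nonempty := by
    have : 0 < n := by omega
    exact ⟨⟨0, this⟩, Finset.mem_univ _⟩
  obtain ⟨a, -, ha⟩ := Finset.exists_max_image Finset.univ u hne
  obtain ⟨b, -, hb⟩ := Finset.exists_min_image Finset.univ u hne
  refine ⟨a, b, fun i => ha i (Finset.mem_univ i), fun i => hb i (Finset.mem_univ i), ?_⟩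
  have hn0 : (0:ℝ) < n := by positivity
  have key : (1:ℝ) ≤ u a * (-(n * u b)) := by
    have e1 : (1:ℝ) = ∑ i, u i * (u i - u b) := by
      simp_rw [mul_sub]
      rw [Finset.sum_sub_distrib, ← Finset.sum_mul, h0, zero_mul, sub_zero]
      rw [← h2]
      exact Finset.sum_congr rfl fun i _ => (sq (u i)) ▸ (pow_two (u i)).symm
    have e2 : ∑ i, u i * (u i - u b) ≤ ∑ i, u a * (u i - u b) := by
      refine Finset.sum_le_sum fun i _ => ?_
      exact mul_le_mul_of_nonneg_right (ha i (Finset.mem_univ i))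
        (sub_nonneg.2 (hb i (Finset.mem_univ i)))
    have e3 : ∑ i, u a * (u i - u b) = u a * (-(n * u b)) := by
      rw [← Finset.mul_sum, Finset.sum_sub_distrib, h0, Finset.sum_const, Finset.card_univ,
        Fintype.card_fin, nsmul_eq_mul, zero_sub]
    linarith [e1, e2, e3.le, e3.ge]
  rw [div_le_iff₀ hn0]
  nlinarith [mul_nonneg hn0.le (sq_nonneg (u a + u b)), key]

lemma set_nonempty {n : ℕ} (hn : 2 ≤ n) (L : Matrix (Fin n) (Fin n) ℝ) :
    {r : ℝ | ∃ u : Fin n → ℝ, (∑ i, u i ^ 2) = 1 ∧ (∑ i, u i) = 0 ∧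
      r = ∑ i, ∑ j, u i * L i j * u j}.Nonempty := by
  set s : ℝ := (Real.sqrt 2)⁻¹ with hs
  have hs2 : s^2 = 1/2 := by
    rw [hs, inv_pow, Real.sq_sqrt (by norm_num : (0:ℝ) ≤ 2)]; norm_num
  set i0 : Fin n := ⟨0, by omega⟩ with hi0
  set i1 : Fin n := ⟨1, by omega⟩ with hi1
  have hne : i0 ≠ i1 := by simp [hi0, hi1, Fin.ext_iff]
  set u : Fin n → ℝ := fun i => (if i = i0 then s else 0) + (if i = i1 then -s else 0) with hu
  have hsum : (∑ i, u i) = 0 := by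
    rw [hu]
    simp [Finset.sum_add_distrib, Finset.sum_ite_eq']
  have hsq : (∑ i, u i ^ 2) = 1 := by
    have hpt : ∀ i, u i ^ 2 = (if i = i0 then s^2 else 0) + (if i = i1 then s^2 else 0) := by
      intro i
      rw [hu]
      by_cases h0 : i = i0 <;> by_cases h1 : i = i1 <;> simp_all [hne]
    simp_rw [hpt]
    rw [Finset.sum_add_distrib]
    simp [Finset.sum_ite_eq', hs2]
    norm_num
  exact ⟨_, u, hsq, hsum, rfl⟩

/-- For a connected graph on `n ≥ 2` vertices, `λ₂(𝓛) > 2/n³`. -/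
theorem lambda2_lower_bound {n : ℕ} (hn : 2 ≤ n) (H : SimpleGraph (Fin n))
    (hconn : H.Connected) :
    lambda2 (Lap H) > 2 / (n : ℝ) ^ 3 := by
  have hn0 : (0:ℝ) < n := by
    have : 0 < n := by omega
    exact_mod_cast this
  have hn1 : (1:ℝ) ≤ (n:ℝ) - 1 := by
    have : (2:ℝ) ≤ n := by exact_mod_cast hn
    linarith
  have hbound : ∀ r ∈ {r : ℝ | ∃ u : Fin n → ℝ, (∑ i, u i ^ 2) = 1 ∧ (∑ i, u i) = 0 ∧
      r = ∑ i, ∑ j, u i * (Lap H) i j * u j}, 2 / ((n:ℝ) * ((n:ℝ) - 1)) ≤ r := by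
    rintro r ⟨u, h2, h0, rfl⟩
    rw [quad_eq]
    set D := ∑ i, ∑ j, if H.Adj i j then (u i - u j)^2 else 0 with hD
    have hD0 : 0 ≤ D := by
      apply Finset.sum_nonneg
      intro i _
      apply Finset.sum_nonneg
      intro j _
      positivity
    obtain ⟨a, b, -, -, hgap⟩ := gap_bound hn u h2 h0
    obtain ⟨w⟩ := hconn.preconnected a b
    set p := w.toPath with hp
    have hlen : (p.1.length : ℝ) ≤ (n:ℝ) - 1 := by
      have := p.2.length_lt
      rw [Fintype.card_fin] at this
      have h' : p.1.length ≤ n - 1 := by omega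
      have : (p.1.length : ℝ) ≤ ((n - 1 : ℕ) : ℝ) := by exact_mod_cast h'
      calc (p.1.length : ℝ) ≤ ((n - 1 : ℕ) : ℝ) := this
        _ ≤ (n:ℝ) - 1 := by
            rw [Nat.cast_sub (by omega)]
            norm_num
    have hds : 0 ≤ (p.1.darts.map (fun d => (u d.toProd.1 - u d.toProd.2)^2)).sum := by
      apply List.sum_nonneg
      intro x hx
      simp only [List.mem_map] at hx
      obtain ⟨d, _, rfl⟩ := hx
      positivity
    have h1 : (u a - u b)^2 ≤ ((n:ℝ) - 1) * D := by
      calc (u a - u b)^2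
          ≤ (p.1.length : ℝ) * (p.1.darts.map (fun d => (u d.toProd.1 - u d.toProd.2)^2)).sum :=
            walk_bound H u p.1
        _ ≤ ((n:ℝ) - 1) * D := by
            apply mul_le_mul hlen (darts_sum_le H u p.1 p.2) hds (by linarith)
    have h4n : 4 / (n:ℝ) ≤ ((n:ℝ) - 1) * D := le_trans hgap h1
    rw [div_le_div_iff₀ (by positivity : (0:ℝ) < (n:ℝ)*((n:ℝ)-1)) (by norm_num : (0:ℝ) < 2)]
    rw [div_le_iff₀ hn0] at h4n
    nlinarith [h4n]
  have hle : 2 / ((n:ℝ) * ((n:ℝ) - 1)) ≤ lambda2 (Lap H) :=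
    le_csInf (set_nonempty hn (Lap H)) hbound
  have hlt : 2 / (n:ℝ)^3 < 2 / ((n:ℝ) * ((n:ℝ) - 1)) := by
    exact div_lt_div_of_pos_left (by norm_num) (by nlinarith)
      (by nlinarith [mul_nonneg hn0.le (sq_nonneg ((n:ℝ)-1)), mul_pos hn0 hn0])
  linarith
end
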